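/- arXiv:2503.00318 — 4 statements merged into one kernel-verified Lean document; each statement's English description precedes it below -/
import Mathlib

section
/- Assume (M,d,μ) satisfies the volume doubling property VD with constants C_μ, d2 and with R0 = diam(M) (i.e. V(x,R)/V(x,r) ≤ C_μ (R/r)^{d2} for all x ∈ M and 0 < r ≤ R < 2·diam(M)). Let φ be a scale function on M. Let Θ : M × (0,∞) → [1,∞) be Borel measurable such that: (i) for each x ∈ M the map r ↦ Θ(x,r) is nondecreasing; (ii) there exist constants C ≥ 1 and γ0 > 0 with Θ(x,R)/Θ(x,r) ≤ C (φ(x,R)/φ(x,r))(r/R)^{γ0} for all x ∈ M and 0 < r ≤ R < ∞; (iii) ∫_{B(x,r)} Θ(y,r) μ(dy) ≤ C V(x,r) for all x ∈ M and r ∈ (0, diam(M)). Let J : M × M → [0,∞] be a symmetric Borel function satisfying, for some C′ > 0 and all distinct x,y ∈ M, J(x,y) ≤ C′ Θ(x,d(x,y)) Θ(y,d(x,y)) / (V(x,d(x,y)) φ(x,d(x,y))). Then there exists a constant C_J > 0 such that ∫_{M \ B(x,r)} J(x,y) μ(dy) ≤ C_J Θ(x,r)/φ(x,r) for all x ∈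 M and r ∈ (0, diam(M)). -/
open MeasureTheory Metric Set
open scoped ENNReal

/-!
Cut `M \ B(x,r)` into the dyadic annuli `B(x, 2s) \ B(x, s)`, `s = 2ⁿ r`. On such an annulus the
pointwise bound on `J`, monotonicity of `Θ` and `φ` and the decay
`Θ(x,2s)/φ(x,s) ≲ 2^{-nγ₀} Θ(x,r)/φ(x,r)` give
`J(x,y) ≲ 2^{-nγ₀} Θ(x,r)/φ(x,r) · Θ(y,2s) / V(x,s)`, so it suffices that
`∫_{B(x,2s) \ B(x,s)} Θ(y,2s) dμ(y) ≲ V(x,s)`; summing the geometric series gives the claim.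
For `2s < diam M` this is condition (iii) plus `VD`. Otherwise (iii) is unavailable at radius `2s`,
but then `M` is compact, `V(y, s/2) ≳ μ(M)` for every `y` by `VD`, and averaging (iii) at radius
`s/2` over all centres (Fubini) bounds `∫_M Θ(y, s/2) dμ(y) ≲ μ(M) ≲ V(x,s)`, while
`Θ(y,2s) ≲ Θ(y,s/2)` by the scaling of `Θ` and `φ`.
-/

section Annuli

variable {M : Type*} [PseudoMetricSpace M]

lemma compl_ball_subset_iUnion_annulus (x : M) {r : ℝ} (hr : 0 < r) :
    (ball x r)ᶜ ⊆ ⋃ n : ℕ, ball x (2 * (2 ^ n * r)) \ ball x (2 ^ n * r) := by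
  intro y hy
  have hry : 1 ≤ dist y x / r := by
    rw [one_le_div hr]
    simpa using hy
  obtain ⟨n, hlow, hupp⟩ := exists_nat_pow_near hry one_lt_two
  rw [le_div_iff₀ hr] at hlow
  rw [div_lt_iff₀ hr, pow_succ] at hupp
  exact mem_iUnion.mpr ⟨n, by rw [mem_ball]; linarith, by rwa [mem_ball, not_lt]⟩

lemma ball_eq_univ_of_ediam_lt (x : M) {r : ℝ} (h : ediam (univ : Set M) < ENNReal.ofReal r) :
    ball x r = univ :=
  eq_univ_of_forall fun y => edist_lt_ofReal.mp <|
    (edist_le_ediam_of_mem (mem_univ y) (mem_univ x)).trans_lt h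

lemma setLIntegral_compl_ball_le_of_annuli [MeasurableSpace M] {μ : Measure M} {f : M → ℝ≥0∞}
    {x : M} {r B q : ℝ} (hr : 0 < r) (hB : 0 ≤ B) (hq0 : 0 ≤ q) (hq1 : q < 1)
    (hf : ∀ n : ℕ, ∫⁻ y in ball x (2 * (2 ^ n * r)) \ ball x (2 ^ n * r), f y ∂μ ≤
      ENNReal.ofReal (B * q ^ n)) :
    ∫⁻ y in (ball x r)ᶜ, f y ∂μ ≤ ENNReal.ofReal (B / (1 - q)) := by
  have hsum : HasSum (fun n : ℕ => B * q ^ n) (B / (1 - q)) := by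
    simpa only [div_eq_mul_inv] using (hasSum_geometric_of_lt_one hq0 hq1).mul_left B
  calc ∫⁻ y in (ball x r)ᶜ, f y ∂μ
      ≤ ∫⁻ y in ⋃ n : ℕ, ball x (2 * (2 ^ n * r)) \ ball x (2 ^ n * r), f y ∂μ :=
        lintegral_mono_set (compl_ball_subset_iUnion_annulus x hr)
    _ ≤ ∑' n : ℕ, ∫⁻ y in ball x (2 * (2 ^ n * r)) \ ball x (2 ^ n * r), f y ∂μ :=
        lintegral_iUnion_le _ _
    _ ≤ ∑' n : ℕ, ENNReal.ofReal (B * q ^ n) := ENNReal.tsum_le_tsum hf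
    _ = ENNReal.ofReal (B / (1 - q)) := by
        rw [← ENNReal.ofReal_tsum_of_nonneg (fun n => by positivity) hsum.summable,
          hsum.tsum_eq]

end Annuli

section Averaging

variable {M : Type*} [PseudoMetricSpace M] [SecondCountableTopology M] [MeasurableSpace M]
  [OpensMeasurableSpace M]

lemma lintegral_mul_measure_ball_eq (μ : Measure M) [SFinite μ] {f : M → ℝ≥0∞}
    (hf : Measurable f) (ρ : ℝ) :
    ∫⁻ y, f y * μ (ball y ρ) ∂μ = ∫⁻ z, ∫⁻ y in ball z ρ, f y ∂μ ∂μ := by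
  have hmeas : Measurable (Function.uncurry fun z y => (ball z ρ).indicator f y) := by
    have hset : MeasurableSet {p : M × M | dist p.2 p.1 < ρ} :=
      measurableSet_lt (measurable_dist.comp measurable_swap) measurable_const
    exact (hf.comp measurable_snd).indicator hset
  simp_rw [← lintegral_indicator measurableSet_ball]
  rw [lintegral_lintegral_swap hmeas.aemeasurable]
  refine lintegral_congr fun y => ?_
  have hswap : ∀ z, (ball z ρ).indicator f y = (ball y ρ).indicator (fun _ => f y) z := by
    intro z
    simp only [indicator, mem_ball, dist_comm]
  simp_rw [hswap, lintegral_indicator_const measurableSet_ball]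

lemma lintegral_le_of_setLIntegral_ball_le (μ : Measure M) [IsFiniteMeasure μ]
    {f : M → ℝ≥0∞} (hf : Measurable f) {ρ : ℝ} {K A : ℝ≥0∞} (hK : K ≠ ⊤)
    (hμK : ∀ y, μ univ ≤ K * μ (ball y ρ)) (hA : ∀ z, ∫⁻ y in ball z ρ, f y ∂μ ≤ A) :
    ∫⁻ y, f y ∂μ ≤ K * A := by
  rcases eq_zero_or_neZero μ with rfl | _
  · simp
  refine (ENNReal.mul_le_mul_iff_right (NeZero.ne (μ univ))
    (measure_ne_top μ univ)).mp ?_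
  calc μ univ * ∫⁻ y, f y ∂μ = ∫⁻ y, f y * μ univ ∂μ := by
        rw [lintegral_mul_const' _ _ (measure_ne_top μ univ), mul_comm]
    _ ≤ ∫⁻ y, K * (f y * μ (ball y ρ)) ∂μ := lintegral_mono fun y => by
        rw [mul_left_comm]
        exact mul_le_mul_right (hμK y) _
    _ = K * ∫⁻ z, ∫⁻ y in ball z ρ, f y ∂μ ∂μ := by
        rw [lintegral_const_mul' _ _ hK, lintegral_mul_measure_ball_eq μ hf]
    _ ≤ K * ∫⁻ _z, A ∂μ := by gcongr with z; exact hA z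
    _ = μ univ * (K * A) := by rw [lintegral_const]; ring

end Averaging

section ScaleAndWeight

variable {θ ϕ : ℝ → ℝ} {C cU β2 γ0 : ℝ}

lemma weight_le_of_scaling (hC : 0 ≤ C) (hγ0 : 0 ≤ γ0) (hθ : ∀ r, 0 < r → 0 < θ r)
    (hϕ : ∀ r, 0 < r → 0 < ϕ r) (hϕU : ∀ r R, 0 < r → r ≤ R → ϕ R / ϕ r ≤ cU * (R / r) ^ β2)
    (hθscale : ∀ r R, 0 < r → r ≤ R → θ R / θ r ≤ C * (ϕ R / ϕ r) * (r / R) ^ γ0)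
    {r R : ℝ} (hr : 0 < r) (hrR : r ≤ R) :
    θ R ≤ C * cU * (R / r) ^ β2 * θ r := by
  have hR : 0 < R := hr.trans_le hrR
  have hpow : (r / R) ^ γ0 ≤ 1 :=
    Real.rpow_le_one (by positivity) ((div_le_one hR).mpr hrR) hγ0
  calc θ R ≤ C * (ϕ R / ϕ r) * (r / R) ^ γ0 * θ r :=
        (div_le_iff₀ (hθ r hr)).mp (hθscale r R hr hrR)
    _ ≤ C * (cU * (R / r) ^ β2) * 1 * θ r := by
        have hθr := (hθ r hr).le
        have hratio : 0 ≤ ϕ R / ϕ r := div_nonneg (hϕ R hR).le (hϕ r hr).le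
        have hcU : 0 ≤ cU * (R / r) ^ β2 := hratio.trans (hϕU r R hr hrR)
        gcongr
        exact hϕU r R hr hrR
    _ = C * cU * (R / r) ^ β2 * θ r := by ring

lemma weight_div_scale_le (hθ : ∀ r, 0 < r → 0 < θ r) (hϕ : ∀ r, 0 < r → 0 < ϕ r)
    (hθscale : ∀ r R, 0 < r → r ≤ R → θ R / θ r ≤ C * (ϕ R / ϕ r) * (r / R) ^ γ0)
    {r R : ℝ} (hr : 0 < r) (hrR : r ≤ R) :
    θ R / ϕ R ≤ C * (r / R) ^ γ0 * (θ r / ϕ r) := by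
  have hR : 0 < R := hr.trans_le hrR
  have h := hθscale r R hr hrR
  rw [div_le_iff₀ (hθ r hr)] at h
  rw [div_le_iff₀ (hϕ R hR)]
  calc θ R ≤ C * (ϕ R / ϕ r) * (r / R) ^ γ0 * θ r := h
    _ = C * (r / R) ^ γ0 * (θ r / ϕ r) * ϕ R := by field_simp

lemma weight_two_mul_div_scale_le (hC : 0 ≤ C) (hθ : ∀ r, 0 < r → 0 < θ r)
    (hϕ : ∀ r, 0 < r → 0 < ϕ r) (hϕU : ∀ r R, 0 < r → r ≤ R → ϕ R / ϕ r ≤ cU * (R / r) ^ β2)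
    (hθscale : ∀ r R, 0 < r → r ≤ R → θ R / θ r ≤ C * (ϕ R / ϕ r) * (r / R) ^ γ0)
    {r s : ℝ} (hr : 0 < r) (hrs : r ≤ s) :
    θ (2 * s) / ϕ s ≤ C * cU * 2 ^ β2 * (r / (2 * s)) ^ γ0 * (θ r / ϕ r) := by
  have hs : 0 < s := hr.trans_le hrs
  have hdoubling : ϕ (2 * s) / ϕ s ≤ cU * 2 ^ β2 := by
    simpa only [mul_div_cancel_right₀ 2 hs.ne'] using hϕU s (2 * s) hs (by linarith)
  have hdecay : 0 ≤ C * (r / (2 * s)) ^ γ0 * (θ r / ϕ r) :=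
    mul_nonneg (mul_nonneg hC (by positivity)) (div_nonneg (hθ r hr).le (hϕ r hr).le)
  calc θ (2 * s) / ϕ s = θ (2 * s) / ϕ (2 * s) * (ϕ (2 * s) / ϕ s) := by
        have := (hϕ (2 * s) (by positivity)).ne'
        field_simp
    _ ≤ C * (r / (2 * s)) ^ γ0 * (θ r / ϕ r) * (cU * 2 ^ β2) :=
        mul_le_mul (weight_div_scale_le hθ hϕ hθscale hr (by linarith)) hdoubling
          (div_nonneg (hϕ _ (by positivity)).le (hϕ s hs).le) hdecay
    _ = C * cU * 2 ^ β2 * (r / (2 * s)) ^ γ0 * (θ r / ϕ r) := by ring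

lemma rpow_div_two_mul_two_pow_mul_le {r γ : ℝ} (hr : 0 < r) (hγ : 0 ≤ γ) (n : ℕ) :
    (r / (2 * (2 ^ n * r))) ^ γ ≤ ((2 : ℝ)⁻¹ ^ γ) ^ n := by
  rw [Real.rpow_pow_comm (by norm_num)]
  have h : r / (2 * (2 ^ n * r)) = 2⁻¹ * 2⁻¹ ^ n := by
    rw [inv_pow]
    field_simp
  refine Real.rpow_le_rpow (by positivity) ?_ hγ
  rw [h]
  exact mul_le_of_le_one_left (by positivity) (by norm_num)

end ScaleAndWeight

section VolumeDoubling

variable {M : Type*} [MetricSpace M] [MeasurableSpace M]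

def VolumeDoubling (μ : Measure M) (Cμ d2 : ℝ) : Prop :=
  ∀ (x : M) (r R : ℝ), 0 < r → r ≤ R → ENNReal.ofReal R < 2 * ediam (univ : Set M) →
    μ (ball x R) ≤ ENNReal.ofReal (Cμ * (R / r) ^ d2) * μ (ball x r)

variable {μ : Measure M} {Cμ d2 : ℝ}

lemma measure_univ_le_of_ediam_le (hCμ : 0 ≤ Cμ) (hd2 : 0 ≤ d2) (hVD : VolumeDoubling μ Cμ d2)
    (y : M) {ρ : ℝ} (hρ : 0 < ρ) (hρD : ENNReal.ofReal ρ ≤ ediam (univ : Set M))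
    (hDρ : ediam (univ : Set M) ≤ ENNReal.ofReal (4 * ρ)) :
    μ univ ≤ ENNReal.ofReal (Cμ * 6 ^ d2) * μ (ball y ρ) := by
  have hDtop : ediam (univ : Set M) ≠ ⊤ := ne_top_of_le_ne_top ENNReal.ofReal_ne_top hDρ
  set D := (ediam (univ : Set M)).toReal
  have hD : ediam (univ : Set M) = ENNReal.ofReal D := (ENNReal.ofReal_toReal hDtop).symm
  rw [hD, ENNReal.ofReal_le_ofReal_iff ENNReal.toReal_nonneg] at hρD
  rw [hD, ENNReal.ofReal_le_ofReal_iff (by positivity)] at hDρ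
  -- a radius strictly between `diam M` and `2 diam M`, so that `VD` applies to the whole space
  have hball : ball y (3 / 2 * D) = univ :=
    ball_eq_univ_of_ediam_lt y <| by
      rw [hD]
      exact (ENNReal.ofReal_lt_ofReal_iff (by linarith)).mpr (by linarith)
  have hR : ENNReal.ofReal (3 / 2 * D) < 2 * ediam (univ : Set M) := by
    rw [hD, ← ENNReal.ofReal_ofNat 2, ← ENNReal.ofReal_mul (by norm_num)]
    exact (ENNReal.ofReal_lt_ofReal_iff (by linarith)).mpr (by linarith)
  calc μ univ = μ (ball y (3 / 2 * D)) := by rw [hball]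
    _ ≤ ENNReal.ofReal (Cμ * (3 / 2 * D / ρ) ^ d2) * μ (ball y ρ) :=
        hVD y ρ _ hρ (by linarith) hR
    _ ≤ ENNReal.ofReal (Cμ * 6 ^ d2) * μ (ball y ρ) := by
        gcongr
        rw [div_le_iff₀ hρ]
        linarith

end VolumeDoubling

section WeightIntegral

variable {M : Type*} [MetricSpace M] [MeasurableSpace M] {μ : Measure M}
  {Cμ d2 : ℝ} {Θ : M → ℝ → ℝ} {C : ℝ}

lemma setLIntegral_weight_ball_two_mul_le (hVD : VolumeDoubling μ Cμ d2)
    (hΘvol : ∀ (x : M) (r : ℝ), 0 < r → ENNReal.ofReal r < ediam (univ : Set M) →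
      ∫⁻ y in ball x r, ENNReal.ofReal (Θ y r) ∂μ ≤ ENNReal.ofReal C * μ (ball x r))
    (x : M) {s : ℝ} (hs : 0 < s) (hsD : ENNReal.ofReal (2 * s) < ediam (univ : Set M)) :
    ∫⁻ y in ball x (2 * s), ENNReal.ofReal (Θ y (2 * s)) ∂μ ≤
      ENNReal.ofReal C * ENNReal.ofReal (Cμ * 2 ^ d2) * μ (ball x s) := by
  have hVDs := hVD x s (2 * s) hs (by linarith) (hsD.trans_le (le_mul_of_one_le_left' one_le_two))
  rw [mul_div_cancel_right₀ 2 hs.ne'] at hVDs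
  calc ∫⁻ y in ball x (2 * s), ENNReal.ofReal (Θ y (2 * s)) ∂μ
      ≤ ENNReal.ofReal C * μ (ball x (2 * s)) := hΘvol x (2 * s) (by positivity) hsD
    _ ≤ ENNReal.ofReal C * (ENNReal.ofReal (Cμ * 2 ^ d2) * μ (ball x s)) := by gcongr
    _ = ENNReal.ofReal C * ENNReal.ofReal (Cμ * 2 ^ d2) * μ (ball x s) := by ring

variable [BorelSpace M] [ProperSpace M] [IsLocallyFiniteMeasure μ]

lemma lintegral_weight_le_of_ediam_le (hCμ : 0 ≤ Cμ) (hd2 : 0 ≤ d2)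
    (hVD : VolumeDoubling μ Cμ d2) (hΘmeas : Measurable (Function.uncurry Θ))
    (hΘvol : ∀ (x : M) (r : ℝ), 0 < r → ENNReal.ofReal r < ediam (univ : Set M) →
      ∫⁻ y in ball x r, ENNReal.ofReal (Θ y r) ∂μ ≤ ENNReal.ofReal C * μ (ball x r))
    {ρ : ℝ} (hρ : 0 < ρ) (hρD : ENNReal.ofReal ρ < ediam (univ : Set M))
    (hDρ : ediam (univ : Set M) ≤ ENNReal.ofReal (4 * ρ)) :
    ∫⁻ y, ENNReal.ofReal (Θ y ρ) ∂μ ≤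
      ENNReal.ofReal (Cμ * 6 ^ d2) * (ENNReal.ofReal C * μ univ) := by
  have : CompactSpace M := compactSpace_iff_isBounded_univ.mpr <|
    isBounded_iff_ediam_ne_top.mpr (ne_top_of_le_ne_top ENNReal.ofReal_ne_top hDρ)
  refine lintegral_le_of_setLIntegral_ball_le μ
    (hΘmeas.comp (measurable_id.prodMk measurable_const)).ennreal_ofReal ENNReal.ofReal_ne_top
    (fun y => measure_univ_le_of_ediam_le hCμ hd2 hVD y hρ hρD.le hDρ)
    (fun z => (hΘvol z ρ hρ hρD).trans ?_)
  gcongr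
  exact subset_univ _

end WeightIntegral

section AnnulusWeight

variable {M : Type*} [MetricSpace M] [MeasurableSpace M] [BorelSpace M] [ProperSpace M]
  {μ : Measure M} [IsLocallyFiniteMeasure μ] {Cμ d2 : ℝ} {φ Θ : M → ℝ → ℝ} {C cU β2 γ0 : ℝ}

lemma lintegral_weight_two_mul_le_of_ediam_le (hC : 0 ≤ C) (hγ0 : 0 ≤ γ0) (hCμ : 0 ≤ Cμ)
    (hd2 : 0 ≤ d2) (hVD : VolumeDoubling μ Cμ d2) (hΘmeas : Measurable (Function.uncurry Θ))
    (hΘvol : ∀ (x : M) (r : ℝ), 0 < r → ENNReal.ofReal r < ediam (univ : Set M) →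
      ∫⁻ y in ball x r, ENNReal.ofReal (Θ y r) ∂μ ≤ ENNReal.ofReal C * μ (ball x r))
    (hΘpos : ∀ (y : M) (r : ℝ), 0 < r → 0 < Θ y r) (hφpos : ∀ (y : M) (r : ℝ), 0 < r → 0 < φ y r)
    (hφscaleU : ∀ (y : M) (r R : ℝ), 0 < r → r ≤ R → φ y R / φ y r ≤ cU * (R / r) ^ β2)
    (hΘscale : ∀ (y : M) (r R : ℝ), 0 < r → r ≤ R →
      Θ y R / Θ y r ≤ C * (φ y R / φ y r) * (r / R) ^ γ0)
    (x : M) {s : ℝ} (hs : 0 < s) (hsD : ENNReal.ofReal s ≤ ediam (univ : Set M))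
    (hDs : ediam (univ : Set M) ≤ ENNReal.ofReal (2 * s)) :
    ∫⁻ y, ENNReal.ofReal (Θ y (2 * s)) ∂μ ≤ ENNReal.ofReal (C * cU * 4 ^ β2) *
      (ENNReal.ofReal (Cμ * 6 ^ d2) * (ENNReal.ofReal C * (ENNReal.ofReal (Cμ * 6 ^ d2) *
        μ (ball x s)))) := by
  have hs2 : 0 < s / 2 := half_pos hs
  have hs2D : ENNReal.ofReal (s / 2) < ediam (univ : Set M) :=
    ((ENNReal.ofReal_lt_ofReal_iff hs).mpr (half_lt_self hs)).trans_le hsD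
  have hDs2 : ediam (univ : Set M) ≤ ENNReal.ofReal (4 * (s / 2)) := by
    rwa [show 4 * (s / 2) = 2 * s by ring]
  have hcmp : ∀ y, Θ y (2 * s) ≤ C * cU * 4 ^ β2 * Θ y (s / 2) := fun y => by
    have h := weight_le_of_scaling hC hγ0 (hΘpos y) (hφpos y) (hφscaleU y) (hΘscale y) hs2
      (by linarith : s / 2 ≤ 2 * s)
    rwa [show 2 * s / (s / 2) = 4 by field_simp; norm_num] at h
  calc ∫⁻ y, ENNReal.ofReal (Θ y (2 * s)) ∂μ
      ≤ ∫⁻ y, ENNReal.ofReal (C * cU * 4 ^ β2) * ENNReal.ofReal (Θ y (s / 2)) ∂μ :=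
        lintegral_mono fun y => by
          rw [← ENNReal.ofReal_mul' (hΘpos y (s / 2) hs2).le]
          exact ENNReal.ofReal_le_ofReal (hcmp y)
    _ = ENNReal.ofReal (C * cU * 4 ^ β2) * ∫⁻ y, ENNReal.ofReal (Θ y (s / 2)) ∂μ :=
        lintegral_const_mul' _ _ ENNReal.ofReal_ne_top
    _ ≤ _ := by
        gcongr
        refine (lintegral_weight_le_of_ediam_le hCμ hd2 hVD hΘmeas hΘvol hs2 hs2D hDs2).trans ?_
        gcongr
        exact measure_univ_le_of_ediam_le hCμ hd2 hVD x hs hsD (hDs.trans (by gcongr; linarith))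

lemma exists_setLIntegral_annulus_weight_le (hC : 0 < C) (hcU : 0 < cU) (hγ0 : 0 ≤ γ0)
    (hCμ : 0 < Cμ) (hd2 : 0 ≤ d2) (hVD : VolumeDoubling μ Cμ d2)
    (hΘmeas : Measurable (Function.uncurry Θ))
    (hΘvol : ∀ (x : M) (r : ℝ), 0 < r → ENNReal.ofReal r < ediam (univ : Set M) →
      ∫⁻ y in ball x r, ENNReal.ofReal (Θ y r) ∂μ ≤ ENNReal.ofReal C * μ (ball x r))
    (hΘpos : ∀ (y : M) (r : ℝ), 0 < r → 0 < Θ y r) (hφpos : ∀ (y : M) (r : ℝ), 0 < r → 0 < φ y r)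
    (hφscaleU : ∀ (y : M) (r R : ℝ), 0 < r → r ≤ R → φ y R / φ y r ≤ cU * (R / r) ^ β2)
    (hΘscale : ∀ (y : M) (r R : ℝ), 0 < r → r ≤ R →
      Θ y R / Θ y r ≤ C * (φ y R / φ y r) * (r / R) ^ γ0) :
    ∃ K : ℝ, 0 < K ∧ ∀ (x : M) (s : ℝ), 0 < s →
      ∫⁻ y in ball x (2 * s) \ ball x s, ENNReal.ofReal (Θ y (2 * s)) ∂μ ≤
        ENNReal.ofReal K * μ (ball x s) := by
  have hKin : 0 < C * (Cμ * 2 ^ d2) := mul_pos hC (mul_pos hCμ (by positivity))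
  have hV : 0 ≤ Cμ * 6 ^ d2 := mul_nonneg hCμ.le (by positivity)
  have hΘcmp : 0 ≤ C * cU * 4 ^ β2 := mul_nonneg (mul_pos hC hcU).le (by positivity)
  have hKbd : 0 ≤ C * cU * 4 ^ β2 * (Cμ * 6 ^ d2 * (C * (Cμ * 6 ^ d2))) :=
    mul_nonneg hΘcmp (mul_nonneg hV (mul_nonneg hC.le hV))
  refine ⟨C * (Cμ * 2 ^ d2) + C * cU * 4 ^ β2 * (Cμ * 6 ^ d2 * (C * (Cμ * 6 ^ d2))),
    by linarith, fun x s hs => ?_⟩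
  rcases lt_or_ge (ediam (univ : Set M)) (ENNReal.ofReal s) with hDs | hsD
  · simp [ball_eq_univ_of_ediam_lt x hDs]
  rcases lt_or_ge (ENNReal.ofReal (2 * s)) (ediam (univ : Set M)) with hsD' | hDs'
  · calc ∫⁻ y in ball x (2 * s) \ ball x s, ENNReal.ofReal (Θ y (2 * s)) ∂μ
        ≤ ∫⁻ y in ball x (2 * s), ENNReal.ofReal (Θ y (2 * s)) ∂μ :=
          lintegral_mono_set sdiff_subset
      _ ≤ ENNReal.ofReal C * ENNReal.ofReal (Cμ * 2 ^ d2) * μ (ball x s) :=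
          setLIntegral_weight_ball_two_mul_le hVD hΘvol x hs hsD'
      _ ≤ _ := by
          rw [← ENNReal.ofReal_mul hC.le]
          gcongr
          linarith
  · calc ∫⁻ y in ball x (2 * s) \ ball x s, ENNReal.ofReal (Θ y (2 * s)) ∂μ
        ≤ ∫⁻ y, ENNReal.ofReal (Θ y (2 * s)) ∂μ := setLIntegral_le_lintegral _ _
      _ ≤ _ := lintegral_weight_two_mul_le_of_ediam_le hC.le hγ0 hCμ.le hd2 hVD hΘmeas hΘvol
          hΘpos hφpos hφscaleU hΘscale x hs hsD hDs'
      _ = ENNReal.ofReal (C * cU * 4 ^ β2 * (Cμ * 6 ^ d2 * (C * (Cμ * 6 ^ d2)))) *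
            μ (ball x s) := by
          rw [ENNReal.ofReal_mul hΘcmp, ENNReal.ofReal_mul hV, ENNReal.ofReal_mul hC.le]
          ring
      _ ≤ _ := by
          gcongr
          linarith

end AnnulusWeight

section Jump

variable {M : Type*} [MetricSpace M] [MeasurableSpace M] {μ : Measure M} {φ Θ : M → ℝ → ℝ}
  {J : M → M → ℝ≥0∞} {C' : ℝ}

lemma jump_le_of_mem_annulus (hC' : 0 ≤ C') (hΘpos : ∀ (y : M) (r : ℝ), 0 < r → 0 < Θ y r)
    (hφpos : ∀ (y : M) (r : ℝ), 0 < r → 0 < φ y r) (hΘmono : ∀ x : M, MonotoneOn (Θ x) (Ioi 0))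
    (hφmono : ∀ x : M, MonotoneOn (φ x) (Ioi 0))
    (hJle : ∀ x y : M, x ≠ y →
      J x y ≤ ENNReal.ofReal (C' * Θ x (dist x y) * Θ y (dist x y) / φ x (dist x y)) /
        μ (ball x (dist x y)))
    {x y : M} {s : ℝ} (hs : 0 < s) (hy : y ∈ ball x (2 * s) \ ball x s) :
    J x y ≤ ENNReal.ofReal (C' * Θ x (2 * s) / φ x s) * ENNReal.ofReal (Θ y (2 * s)) /
      μ (ball x s) := by
  obtain ⟨hy2, hy1⟩ := hy
  rw [mem_ball'] at hy2
  rw [mem_ball', not_lt] at hy1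
  have hd : 0 < dist x y := hs.trans_le hy1
  have h2s : (0 : ℝ) < 2 * s := by positivity
  refine (hJle x y (dist_pos.mp hd)).trans
    (ENNReal.div_le_div ?_ (measure_mono (ball_subset_ball hy1)))
  rw [← ENNReal.ofReal_mul' (hΘpos y _ h2s).le]
  refine ENNReal.ofReal_le_ofReal ?_
  have hΘx : Θ x (dist x y) ≤ Θ x (2 * s) := hΘmono x hd h2s hy2.le
  have hΘy : Θ y (dist x y) ≤ Θ y (2 * s) := hΘmono y hd h2s hy2.le
  have hφ : φ x s ≤ φ x (dist x y) := hφmono x hs hd hy1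
  calc C' * Θ x (dist x y) * Θ y (dist x y) / φ x (dist x y)
      ≤ C' * Θ x (2 * s) * Θ y (2 * s) / φ x s :=
        div_le_div₀ (by have := hΘpos x _ h2s; have := hΘpos y _ h2s; positivity)
          (mul_le_mul (mul_le_mul_of_nonneg_left hΘx hC') hΘy (hΘpos y _ hd).le
            (mul_nonneg hC' (hΘpos x _ h2s).le))
          (hφpos x s hs) hφ
    _ = C' * Θ x (2 * s) / φ x s * Θ y (2 * s) := by ring

lemma setLIntegral_jump_annulus_le [OpensMeasurableSpace M] [μ.IsOpenPosMeasure] (hC' : 0 ≤ C')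
    (hΘpos : ∀ (y : M) (r : ℝ), 0 < r → 0 < Θ y r)
    (hφpos : ∀ (y : M) (r : ℝ), 0 < r → 0 < φ y r) (hΘmono : ∀ x : M, MonotoneOn (Θ x) (Ioi 0))
    (hφmono : ∀ x : M, MonotoneOn (φ x) (Ioi 0))
    (hJle : ∀ x y : M, x ≠ y →
      J x y ≤ ENNReal.ofReal (C' * Θ x (dist x y) * Θ y (dist x y) / φ x (dist x y)) /
        μ (ball x (dist x y)))
    {x : M} {s K : ℝ} (hs : 0 < s)
    (hK : ∫⁻ y in ball x (2 * s) \ ball x s, ENNReal.ofReal (Θ y (2 * s)) ∂μ ≤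
      ENNReal.ofReal K * μ (ball x s)) :
    ∫⁻ y in ball x (2 * s) \ ball x s, J x y ∂μ ≤
      ENNReal.ofReal (C' * Θ x (2 * s) / φ x s) * ENNReal.ofReal K := by
  set a := ENNReal.ofReal (C' * Θ x (2 * s) / φ x s)
  have hμ : (μ (ball x s))⁻¹ ≠ ⊤ := ENNReal.inv_ne_top.mpr (measure_ball_pos μ x hs).ne'
  calc ∫⁻ y in ball x (2 * s) \ ball x s, J x y ∂μ
      ≤ ∫⁻ y in ball x (2 * s) \ ball x s, a * ENNReal.ofReal (Θ y (2 * s)) / μ (ball x s) ∂μ :=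
        setLIntegral_mono' (measurableSet_ball.diff measurableSet_ball) fun y hy =>
          jump_le_of_mem_annulus hC' hΘpos hφpos hΘmono hφmono hJle hs hy
    _ = a * (∫⁻ y in ball x (2 * s) \ ball x s, ENNReal.ofReal (Θ y (2 * s)) ∂μ) /
          μ (ball x s) := by
        simp_rw [div_eq_mul_inv]
        rw [lintegral_mul_const' _ _ hμ, lintegral_const_mul' _ _ ENNReal.ofReal_ne_top]
    _ ≤ a * ENNReal.ofReal K := ENNReal.div_le_of_le_mul (by rw [mul_assoc]; gcongr)

lemma setLIntegral_jump_dyadic_annulus_le [OpensMeasurableSpace M] [μ.IsOpenPosMeasure]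
    {C cU β2 γ0 : ℝ} (hC : 0 ≤ C) (hcU : 0 ≤ cU) (hC' : 0 ≤ C') (hγ0 : 0 ≤ γ0)
    (hΘpos : ∀ (y : M) (r : ℝ), 0 < r → 0 < Θ y r)
    (hφpos : ∀ (y : M) (r : ℝ), 0 < r → 0 < φ y r) (hΘmono : ∀ x : M, MonotoneOn (Θ x) (Ioi 0))
    (hφmono : ∀ x : M, MonotoneOn (φ x) (Ioi 0))
    (hφscaleU : ∀ (y : M) (r R : ℝ), 0 < r → r ≤ R → φ y R / φ y r ≤ cU * (R / r) ^ β2)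
    (hΘscale : ∀ (y : M) (r R : ℝ), 0 < r → r ≤ R →
      Θ y R / Θ y r ≤ C * (φ y R / φ y r) * (r / R) ^ γ0)
    (hJle : ∀ x y : M, x ≠ y →
      J x y ≤ ENNReal.ofReal (C' * Θ x (dist x y) * Θ y (dist x y) / φ x (dist x y)) /
        μ (ball x (dist x y)))
    {x : M} {K : ℝ} (hK : 0 ≤ K)
    (hannulus : ∀ s : ℝ, 0 < s →
      ∫⁻ y in ball x (2 * s) \ ball x s, ENNReal.ofReal (Θ y (2 * s)) ∂μ ≤
        ENNReal.ofReal K * μ (ball x s))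
    {r : ℝ} (hr : 0 < r) (n : ℕ) :
    ∫⁻ y in ball x (2 * (2 ^ n * r)) \ ball x (2 ^ n * r), J x y ∂μ ≤
      ENNReal.ofReal (C' * K * (C * cU * 2 ^ β2) * (Θ x r / φ x r) * ((2 : ℝ)⁻¹ ^ γ0) ^ n) := by
  have hs : 0 < 2 ^ n * r := by positivity
  have hdecay := weight_two_mul_div_scale_le hC (hΘpos x) (hφpos x) (hφscaleU x) (hΘscale x) hr
    (le_mul_of_one_le_left hr.le (one_le_pow₀ one_le_two) : r ≤ 2 ^ n * r)
  calc ∫⁻ y in ball x (2 * (2 ^ n * r)) \ ball x (2 ^ n * r), J x y ∂μ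
      ≤ ENNReal.ofReal (C' * Θ x (2 * (2 ^ n * r)) / φ x (2 ^ n * r)) * ENNReal.ofReal K :=
        setLIntegral_jump_annulus_le hC' hΘpos hφpos hΘmono hφmono hJle hs (hannulus _ hs)
    _ = ENNReal.ofReal (C' * K * (Θ x (2 * (2 ^ n * r)) / φ x (2 ^ n * r))) := by
        rw [← ENNReal.ofReal_mul' hK]
        congr 1
        ring
    _ ≤ _ := by
        refine ENNReal.ofReal_le_ofReal ?_
        calc C' * K * (Θ x (2 * (2 ^ n * r)) / φ x (2 ^ n * r))
            ≤ C' * K * (C * cU * 2 ^ β2 * ((2 : ℝ)⁻¹ ^ γ0) ^ n * (Θ x r / φ x r)) := by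
              gcongr
              refine hdecay.trans ?_
              have := div_nonneg (hΘpos x r hr).le (hφpos x r hr).le
              have := mul_nonneg (mul_nonneg hC hcU) (by positivity : (0 : ℝ) ≤ 2 ^ β2)
              gcongr
              exact rpow_div_two_mul_two_pow_mul_le hr hγ0 n
          _ = C' * K * (C * cU * 2 ^ β2) * (Θ x r / φ x r) * ((2 : ℝ)⁻¹ ^ γ0) ^ n := by ring

end Jump

theorem jump_density_bound_implies_tail_condition_general
    {M : Type*} [MetricSpace M] [MeasurableSpace M] [BorelSpace M] [ProperSpace M]
    (μ : Measure M) [IsLocallyFiniteMeasure μ] [μ.IsOpenPosMeasure]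
    -- volume doubling with R0 = diam M
    (Cμ d2 : ℝ) (hCμ : 0 < Cμ) (hd2 : 0 < d2)
    (hVD : ∀ (x : M) (r R : ℝ), 0 < r → r ≤ R →
      ENNReal.ofReal R < 2 * EMetric.diam (Set.univ : Set M) →
      μ (ball x R) ≤ ENNReal.ofReal (Cμ * (R / r) ^ d2) * μ (ball x r))
    -- scale function φ
    (φ : M → ℝ → ℝ) (β2 cU : ℝ)
    (hcU : 0 < cU)
    (hφpos : ∀ (x : M) (r : ℝ), 0 < r → 0 < φ x r)
    (hφmono : ∀ x : M, StrictMonoOn (φ x) (Set.Ioi 0))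
    (hφscaleU : ∀ (x : M) (r R : ℝ), 0 < r → r ≤ R → φ x R / φ x r ≤ cU * (R / r) ^ β2)
    -- admissible weight function Θ
    (Θ : M → ℝ → ℝ) (C γ0 : ℝ) (hC : 1 ≤ C) (hγ0 : 0 < γ0)
    (hΘmeas : Measurable (Function.uncurry Θ))
    (hΘ1 : ∀ (x : M) (r : ℝ), 0 < r → 1 ≤ Θ x r)
    (hΘmono : ∀ x : M, MonotoneOn (Θ x) (Set.Ioi 0))
    (hΘscale : ∀ (x : M) (r R : ℝ), 0 < r → r ≤ R →
      Θ x R / Θ x r ≤ C * (φ x R / φ x r) * (r / R) ^ γ0)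
    (hΘvol : ∀ (x : M) (r : ℝ), 0 < r →
      ENNReal.ofReal r < EMetric.diam (Set.univ : Set M) →
      ∫⁻ y in ball x r, ENNReal.ofReal (Θ y r) ∂μ ≤ ENNReal.ofReal C * μ (ball x r))
    -- jump density and its pointwise upper bound
    (J : M → M → ℝ≥0∞) (C' : ℝ) (hC' : 0 < C')
    (hJle : ∀ x y : M, x ≠ y →
      J x y ≤ ENNReal.ofReal (C' * Θ x (dist x y) * Θ y (dist x y) / φ x (dist x y)) /
        μ (ball x (dist x y))) :
    ∃ CJ : ℝ, 0 < CJ ∧ ∀ (x : M) (r : ℝ), 0 < r →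
      ENNReal.ofReal r < EMetric.diam (Set.univ : Set M) →
      ∫⁻ y in (ball x r)ᶜ, J x y ∂μ ≤ ENNReal.ofReal (CJ * Θ x r / φ x r) := by
  have hCpos : 0 < C := one_pos.trans_le hC
  have hΘpos : ∀ (y : M) (r : ℝ), 0 < r → 0 < Θ y r := fun y r hr => one_pos.trans_le (hΘ1 y r hr)
  obtain ⟨K, hK, hannulus⟩ := exists_setLIntegral_annulus_weight_le hCpos hcU hγ0.le hCμ hd2.le
    hVD hΘmeas hΘvol hΘpos hφpos hφscaleU hΘscale
  set q : ℝ := (2 : ℝ)⁻¹ ^ γ0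
  have hq1 : q < 1 := Real.rpow_lt_one (by norm_num) (by norm_num) hγ0
  set B : ℝ := C' * K * (C * cU * 2 ^ β2)
  have hB : 0 < B := mul_pos (mul_pos hC' hK) (mul_pos (mul_pos hCpos hcU) (by positivity))
  refine ⟨B / (1 - q), div_pos hB (by linarith), fun x r hr _ => ?_⟩
  have hΘφ : 0 ≤ Θ x r / φ x r := div_nonneg (hΘpos x r hr).le (hφpos x r hr).le
  rw [show B / (1 - q) * Θ x r / φ x r = B * (Θ x r / φ x r) / (1 - q) by ring]
  exact setLIntegral_compl_ball_le_of_annuli hr (mul_nonneg hB.le hΘφ) (by positivity) hq1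
    (setLIntegral_jump_dyadic_annulus_le hCpos.le hcU.le hC'.le hγ0.le hΘpos hφpos hΘmono
      (fun x => (hφmono x).monotoneOn) hφscaleU hΘscale hJle hK.le (hannulus x) hr)

/-- **Lemma 3.2.** Under volume doubling (with `R0 = diam M`), if `φ` is a scale
function, `Θ` is a weight function (`Θ ≥ 1`, nondecreasing in `r`, satisfying the
scaling condition `Θ(x,R)/Θ(x,r) ≤ C (φ(x,R)/φ(x,r)) (r/R)^γ0` and the volume
compatibility `∫_{B(x,r)} Θ(y,r) dμ(y) ≤ C V(x,r)`), and the symmetric jump density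
`J` satisfies the pointwise bound
`J(x,y) ≤ C' Θ(x,d(x,y)) Θ(y,d(x,y)) / (V(x,d(x,y)) φ(x,d(x,y)))`,
then the weighted tail condition holds: there is `C_J > 0` with
`∫_{B(x,r)ᶜ} J(x,y) dμ(y) ≤ C_J Θ(x,r)/φ(x,r)` for all `x ∈ M`, `0 < r < diam M`. -/
theorem jump_density_bound_implies_tail_condition
    {M : Type*} [MetricSpace M] [MeasurableSpace M] [BorelSpace M] [ProperSpace M]
    (μ : Measure M) [IsLocallyFiniteMeasure μ] [μ.IsOpenPosMeasure]
    -- volume doubling with R0 = diam M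
    (Cμ d2 : ℝ) (hCμ : 0 < Cμ) (hd2 : 0 < d2)
    (hVD : ∀ (x : M) (r R : ℝ), 0 < r → r ≤ R →
      ENNReal.ofReal R < 2 * EMetric.diam (Set.univ : Set M) →
      μ (ball x R) ≤ ENNReal.ofReal (Cμ * (R / r) ^ d2) * μ (ball x r))
    -- scale function φ
    (φ : M → ℝ → ℝ) (β1 β2 cL cU C0 : ℝ)
    (hβ1 : 0 < β1) (hβ12 : β1 ≤ β2) (hcL : 0 < cL) (hcU : 0 < cU) (hC0 : 1 ≤ C0)
    (hφmeas : Measurable (Function.uncurry φ))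
    (hφpos : ∀ (x : M) (r : ℝ), 0 < r → 0 < φ x r)
    (hφmono : ∀ x : M, StrictMonoOn (φ x) (Set.Ioi 0))
    (hφcont : ∀ x : M, ContinuousOn (φ x) (Set.Ioi 0))
    (hφscaleL : ∀ (x : M) (r R : ℝ), 0 < r → r ≤ R → cL * (R / r) ^ β1 ≤ φ x R / φ x r)
    (hφscaleU : ∀ (x : M) (r R : ℝ), 0 < r → r ≤ R → φ x R / φ x r ≤ cU * (R / r) ^ β2)
    (hφcomp : ∀ (x y : M) (r : ℝ), 0 < r → dist x y ≤ r → φ y r ≤ C0 * φ x r)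
    -- admissible weight function Θ
    (Θ : M → ℝ → ℝ) (C γ0 : ℝ) (hC : 1 ≤ C) (hγ0 : 0 < γ0)
    (hΘmeas : Measurable (Function.uncurry Θ))
    (hΘ1 : ∀ (x : M) (r : ℝ), 0 < r → 1 ≤ Θ x r)
    (hΘmono : ∀ x : M, MonotoneOn (Θ x) (Set.Ioi 0))
    (hΘscale : ∀ (x : M) (r R : ℝ), 0 < r → r ≤ R →
      Θ x R / Θ x r ≤ C * (φ x R / φ x r) * (r / R) ^ γ0)
    (hΘvol : ∀ (x : M) (r : ℝ), 0 < r →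
      ENNReal.ofReal r < EMetric.diam (Set.univ : Set M) →
      ∫⁻ y in ball x r, ENNReal.ofReal (Θ y r) ∂μ ≤ ENNReal.ofReal C * μ (ball x r))
    -- jump density and its pointwise upper bound
    (J : M → M → ℝ≥0∞) (C' : ℝ) (hC' : 0 < C')
    (hJsymm : ∀ x y : M, J x y = J y x)
    (hJmeas : Measurable (Function.uncurry J))
    (hJle : ∀ x y : M, x ≠ y →
      J x y ≤ ENNReal.ofReal (C' * Θ x (dist x y) * Θ y (dist x y) / φ x (dist x y)) /
        μ (ball x (dist x y))) :
    ∃ CJ : ℝ, 0 < CJ ∧ ∀ (x : M) (r : ℝ), 0 < r →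
      ENNReal.ofReal r < EMetric.diam (Set.univ : Set M) →
      ∫⁻ y in (ball x r)ᶜ, J x y ∂μ ≤ ENNReal.ofReal (CJ * Θ x r / φ x r) :=
  jump_density_bound_implies_tail_condition_general μ Cμ d2 hCμ hd2 hVD φ β2 cU hcU hφpos hφmono
    hφscaleU Θ C γ0 hC hγ0 hΘmeas hΘ1 hΘmono hΘscale hΘvol J C' hC' hJle
end

section
/- Let φ be a scale function on M with upper scaling exponent β2 and constant c_U, let Θ : M × (0,∞) → [1,∞) be Borel measurable with r ↦ Θ(x,r) nondecreasing for each x ∈ M, and let J be a jump kernel on M satisfying the weighted tail condition: there is C_J ≥ 0 with J(x, M \ B(x,r)) ≤ C_J Θ(x,r)/φ(x,r) for all x ∈ M and r ∈ (0,R0). Then for every γ > β2 there exists a constant C > 0, depending only on γ, β2, c_U and C_J, such that ∫_M min(1, d(x,y)/r)^γ J(x,dy) ≤ C Θ(x,r)/φ(x,r) for all x ∈ M and r ∈ (0,R0). -/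
/-!
Cover `M` by the sets `r / 2 ^ (k + 1) ≤ d(x, y)`: the integrand is at most `2 ^ (-k γ)` on the
dyadic annulus `r / 2 ^ (k + 1) ≤ d(x, y) < r / 2 ^ k`, so the integral is at most
`∑ₖ 2 ^ (-k γ) J(x, B(x, r / 2 ^ (k + 1))ᶜ)`. The tail condition at scale `r / 2 ^ (k + 1)`,
the monotonicity of `Θ` and the upper scaling of `φ` bound the `k`-th tail by
`C_J c_U 2 ^ ((k + 1) β2) Θ(x, r) / φ(x, r)`, and since `γ > β2` the resulting geometric series
has ratio `2 ^ (β2 - γ) < 1`.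
-/

open MeasureTheory Metric Set
open scoped ENNReal

lemma exists_dyadic_scale_le {d r γ : ℝ} (hd : 0 < d) (hr : 0 < r) (hγ : 0 ≤ γ) :
    ∃ k : ℕ, r / 2 ^ (k + 1) ≤ d ∧ min 1 (d / r) ^ γ ≤ ((2 : ℝ) ^ (-γ)) ^ k := by
  rcases le_total r d with hrd | hdr
  · refine ⟨0, by linarith, ?_⟩
    rw [min_eq_left ((one_le_div hr).2 hrd), Real.one_rpow, pow_zero]
  · obtain ⟨k, hk_le, hk_lt⟩ := exists_nat_pow_near ((one_le_div hd).2 hdr) one_lt_two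
    refine ⟨k, ?_, ?_⟩
    · rw [div_le_iff₀ (by positivity)]
      linarith [(div_lt_iff₀ hd).1 hk_lt]
    · have hmin : min 1 (d / r) ≤ ((2 : ℝ) ^ k)⁻¹ := by
        refine (min_le_right _ _).trans ?_
        rw [div_le_iff₀ hr, inv_mul_eq_div, le_div_iff₀ (by positivity)]
        linarith [(le_div_iff₀ hd).1 hk_le]
      calc min 1 (d / r) ^ γ ≤ (((2 : ℝ) ^ k)⁻¹) ^ γ :=
            Real.rpow_le_rpow (le_min zero_le_one (by positivity)) hmin hγ
        _ = ((2 : ℝ) ^ (-γ)) ^ k := by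
          rw [Real.inv_rpow (by positivity), ← Real.rpow_pow_comm zero_le_two,
            Real.rpow_neg zero_le_two, inv_pow]

lemma lintegral_min_one_dist_div_rpow_le {X : Type*} [PseudoMetricSpace X]
    [MeasurableSpace X] [OpensMeasurableSpace X] (ν : Measure X) (x : X) {r γ : ℝ} (hr : 0 < r)
    (hγ : 0 < γ) :
    ∫⁻ y, ENNReal.ofReal (min 1 (dist x y / r) ^ γ) ∂ν ≤
      ∑' k : ℕ, ENNReal.ofReal (((2 : ℝ) ^ (-γ)) ^ k) * ν (ball x (r / 2 ^ (k + 1)))ᶜ := by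
  set w : ℕ → ℝ≥0∞ := fun k => ENNReal.ofReal (((2 : ℝ) ^ (-γ)) ^ k)
  have hpoint : ∀ y, ENNReal.ofReal (min 1 (dist x y / r) ^ γ) ≤
      ∑' k, (ball x (r / 2 ^ (k + 1)))ᶜ.indicator (fun _ => w k) y := by
    intro y
    rcases (dist_nonneg : 0 ≤ dist x y).eq_or_lt with h0 | hpos
    · simp [← h0, hγ.ne']
    obtain ⟨k, hk, hle⟩ := exists_dyadic_scale_le hpos hr hγ.le
    have hy : y ∈ (ball x (r / 2 ^ (k + 1)))ᶜ := by
      rwa [mem_compl_iff, mem_ball, not_lt, dist_comm]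
    calc ENNReal.ofReal (min 1 (dist x y / r) ^ γ) ≤ w k := ENNReal.ofReal_le_ofReal hle
      _ = (ball x (r / 2 ^ (k + 1)))ᶜ.indicator (fun _ => w k) y :=
        (indicator_of_mem hy fun _ => w k).symm
      _ ≤ _ := ENNReal.le_tsum k
  calc _ ≤ ∫⁻ y, ∑' k, (ball x (r / 2 ^ (k + 1)))ᶜ.indicator (fun _ => w k) y ∂ν :=
        lintegral_mono hpoint
    _ = ∑' k, ∫⁻ y, (ball x (r / 2 ^ (k + 1)))ᶜ.indicator (fun _ => w k) y ∂ν :=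
        lintegral_tsum fun _ => (measurable_const.indicator measurableSet_ball.compl).aemeasurable
    _ = _ := by simp_rw [w, lintegral_indicator_const measurableSet_ball.compl]

lemma tsum_ofReal_pow_mul_le {w B A : ℝ} (hw : 0 ≤ w) (hB : 0 ≤ B) (hwB : w * B < 1)
    (hA : 0 ≤ A) {t : ℕ → ℝ≥0∞} (ht : ∀ k, t k ≤ ENNReal.ofReal (A * B ^ (k + 1))) :
    ∑' k, ENNReal.ofReal (w ^ k) * t k ≤ ENNReal.ofReal (A * B / (1 - w * B)) := by
  calc ∑' k, ENNReal.ofReal (w ^ k) * t k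
      ≤ ∑' k : ℕ, ENNReal.ofReal (A * B) * ENNReal.ofReal (w * B) ^ k := by
        refine ENNReal.tsum_le_tsum fun k => ?_
        calc ENNReal.ofReal (w ^ k) * t k
            ≤ ENNReal.ofReal (w ^ k) * ENNReal.ofReal (A * B ^ (k + 1)) := by gcongr; exact ht k
          _ = ENNReal.ofReal (A * B) * ENNReal.ofReal (w * B) ^ k := by
              rw [← ENNReal.ofReal_mul (by positivity), ← ENNReal.ofReal_pow (by positivity),
                ← ENNReal.ofReal_mul (by positivity)]
              ring_nf
    _ = ENNReal.ofReal (A * B) * (1 - ENNReal.ofReal (w * B))⁻¹ := by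
        rw [ENNReal.tsum_mul_left, ENNReal.tsum_geometric]
    _ = ENNReal.ofReal (A * B / (1 - w * B)) := by
        rw [div_eq_mul_inv, ENNReal.ofReal_mul (by positivity : 0 ≤ A * B),
          ENNReal.ofReal_inv_of_pos (by linarith), ENNReal.ofReal_sub _ (by positivity),
          ENNReal.ofReal_one]

lemma div_le_mul_rpow_mul_div {φ Θ : ℝ → ℝ} {c β s r : ℝ} (hφs : 0 < φ s) (hφr : 0 < φ r)
    (hΘ : Θ s ≤ Θ r) (hΘr : 0 ≤ Θ r) (hscale : φ r / φ s ≤ c * (r / s) ^ β) :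
    Θ s / φ s ≤ c * (r / s) ^ β * (Θ r / φ r) :=
  calc Θ s / φ s ≤ Θ r / φ s := by gcongr
    _ = φ r / φ s * (Θ r / φ r) := by field_simp
    _ ≤ c * (r / s) ^ β * (Θ r / φ r) := by gcongr

lemma measure_ball_compl_dyadic_le {X : Type*} [PseudoMetricSpace X] [MeasurableSpace X]
    {ν : Measure X} {x : X} {φ Θ : ℝ → ℝ} {CJ c β R0 r : ℝ} (hCJ : 0 ≤ CJ) (hr : 0 < r)
    (hrR0 : r < R0) (hφ : ∀ s, 0 < s → 0 < φ s)
    (hscale : ∀ s, 0 < s → s ≤ r → φ r / φ s ≤ c * (r / s) ^ β)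
    (hΘ : MonotoneOn Θ (Ioi 0)) (hΘr : 0 ≤ Θ r)
    (htail : ∀ s, 0 < s → s < R0 → ν (ball x s)ᶜ ≤ ENNReal.ofReal (CJ * Θ s / φ s)) (k : ℕ) :
    ν (ball x (r / 2 ^ (k + 1)))ᶜ ≤ ENNReal.ofReal (CJ * c * (Θ r / φ r) * (2 ^ β) ^ (k + 1)) := by
  have hs : 0 < r / 2 ^ (k + 1) := by positivity
  have hsr : r / 2 ^ (k + 1) ≤ r := div_le_self hr.le (one_le_pow₀ one_le_two)
  have hweight := div_le_mul_rpow_mul_div (hφ _ hs) (hφ r hr) (hΘ hs hr hsr) hΘr (hscale _ hs hsr)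
  rw [div_div_cancel₀ hr.ne', ← Real.rpow_pow_comm zero_le_two] at hweight
  refine (htail _ hs (hsr.trans_lt hrR0)).trans (ENNReal.ofReal_le_ofReal ?_)
  rw [mul_div_assoc]
  linarith [mul_le_mul_of_nonneg_left hweight hCJ]

theorem tail_condition_integral_bound_general
    {M : Type*} [MetricSpace M] [MeasurableSpace M] [BorelSpace M]
    (R0 : ℝ)
    -- scale function φ
    (φ : M → ℝ → ℝ) (β1 β2 cU : ℝ)
    (hβ1 : 0 < β1) (hβ12 : β1 ≤ β2) (hcU : 0 < cU)
    (hφpos : ∀ (x : M) (r : ℝ), 0 < r → 0 < φ x r)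
    (hφscaleU : ∀ (x : M) (r R : ℝ), 0 < r → r ≤ R → φ x R / φ x r ≤ cU * (R / r) ^ β2)
    -- weight Θ
    (Θ : M → ℝ → ℝ)
    (hΘ1 : ∀ (x : M) (r : ℝ), 0 < r → 1 ≤ Θ x r)
    (hΘmono : ∀ x : M, MonotoneOn (Θ x) (Set.Ioi 0))
    -- jump kernel J and the weighted tail condition
    (J : M → Measure M)
    (CJ : ℝ) (hCJ : 0 ≤ CJ)
    (hTail : ∀ (x : M) (r : ℝ), 0 < r → r < R0 →
      J x ((ball x r)ᶜ) ≤ ENNReal.ofReal (CJ * Θ x r / φ x r)) :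
    ∀ γ : ℝ, β2 < γ → ∃ C : ℝ, 0 < C ∧ ∀ (x : M) (r : ℝ), 0 < r → r < R0 →
      ∫⁻ y, ENNReal.ofReal (min 1 (dist x y / r) ^ γ) ∂(J x) ≤
        ENNReal.ofReal (C * Θ x r / φ x r) := by
  intro γ hγ
  have hρ : (2 : ℝ) ^ (-γ) * 2 ^ β2 < 1 := by
    rw [← Real.rpow_add two_pos]
    exact Real.rpow_lt_one_of_one_lt_of_neg one_lt_two (by linarith)
  set A := CJ * cU * 2 ^ β2 / (1 - (2 : ℝ) ^ (-γ) * 2 ^ β2)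
  have hA : 0 ≤ A := div_nonneg (by positivity) (by linarith)
  refine ⟨A + 1, by linarith, fun x r hr hrR0 => ?_⟩
  have hΘr : 0 ≤ Θ x r := zero_le_one.trans (hΘ1 x r hr)
  have hT : 0 ≤ Θ x r / φ x r := div_nonneg hΘr (hφpos x r hr).le
  calc ∫⁻ y, ENNReal.ofReal (min 1 (dist x y / r) ^ γ) ∂(J x)
      ≤ ∑' k : ℕ, ENNReal.ofReal (((2 : ℝ) ^ (-γ)) ^ k) * J x (ball x (r / 2 ^ (k + 1)))ᶜ :=
        lintegral_min_one_dist_div_rpow_le (J x) x hr (hβ1.trans_le hβ12 |>.trans hγ)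
    _ ≤ ENNReal.ofReal
          (CJ * cU * (Θ x r / φ x r) * 2 ^ β2 / (1 - (2 : ℝ) ^ (-γ) * 2 ^ β2)) :=
        tsum_ofReal_pow_mul_le (by positivity) (by positivity) hρ (by positivity)
          (measure_ball_compl_dyadic_le hCJ hr hrR0 (hφpos x)
            (fun s hs hsr => hφscaleU x s r hs hsr) (hΘmono x) hΘr (hTail x))
    _ = ENNReal.ofReal (A * (Θ x r / φ x r)) := by simp only [A]; ring_nf
    _ ≤ ENNReal.ofReal ((A + 1) * Θ x r / φ x r) := by
        rw [mul_div_assoc]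
        gcongr
        linarith

/-- **Lemma 3.3.** Let `φ` be a scale function with upper scaling exponent `β2` and
constant `cU`, `Θ ≥ 1` a weight nondecreasing in `r`, and `J` a jump kernel satisfying
the weighted tail condition `J(x, B(x,r)ᶜ) ≤ C_J Θ(x,r)/φ(x,r)` for `0 < r < R0`.
Then for every `γ > β2` there is `C > 0` such that
`∫_M min(1, d(x,y)/r)^γ J(x,dy) ≤ C Θ(x,r)/φ(x,r)` for all `x ∈ M`, `0 < r < R0`. -/
theorem tail_condition_integral_bound
    {M : Type*} [MetricSpace M] [MeasurableSpace M] [BorelSpace M] [ProperSpace M]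
    (R0 : ℝ) (hR0 : 0 < R0)
    (hR0diam : ENNReal.ofReal R0 ≤ EMetric.diam (Set.univ : Set M))
    -- scale function φ
    (φ : M → ℝ → ℝ) (β1 β2 cL cU C0 : ℝ)
    (hβ1 : 0 < β1) (hβ12 : β1 ≤ β2) (hcL : 0 < cL) (hcU : 0 < cU) (hC0 : 1 ≤ C0)
    (hφmeas : Measurable (Function.uncurry φ))
    (hφpos : ∀ (x : M) (r : ℝ), 0 < r → 0 < φ x r)
    (hφmono : ∀ x : M, StrictMonoOn (φ x) (Set.Ioi 0))
    (hφcont : ∀ x : M, ContinuousOn (φ x) (Set.Ioi 0))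
    (hφscaleL : ∀ (x : M) (r R : ℝ), 0 < r → r ≤ R → cL * (R / r) ^ β1 ≤ φ x R / φ x r)
    (hφscaleU : ∀ (x : M) (r R : ℝ), 0 < r → r ≤ R → φ x R / φ x r ≤ cU * (R / r) ^ β2)
    (hφcomp : ∀ (x y : M) (r : ℝ), 0 < r → dist x y ≤ r → φ y r ≤ C0 * φ x r)
    -- weight Θ
    (Θ : M → ℝ → ℝ)
    (hΘmeas : Measurable (Function.uncurry Θ))
    (hΘ1 : ∀ (x : M) (r : ℝ), 0 < r → 1 ≤ Θ x r)
    (hΘmono : ∀ x : M, MonotoneOn (Θ x) (Set.Ioi 0))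
    -- jump kernel J and the weighted tail condition
    (J : M → Measure M)
    (hJmeas : ∀ E : Set M, MeasurableSet E → Measurable fun x => J x E)
    (CJ : ℝ) (hCJ : 0 ≤ CJ)
    (hTail : ∀ (x : M) (r : ℝ), 0 < r → r < R0 →
      J x ((ball x r)ᶜ) ≤ ENNReal.ofReal (CJ * Θ x r / φ x r)) :
    ∀ γ : ℝ, β2 < γ → ∃ C : ℝ, 0 < C ∧ ∀ (x : M) (r : ℝ), 0 < r → r < R0 →
      ∫⁻ y, ENNReal.ofReal (min 1 (dist x y / r) ^ γ) ∂(J x) ≤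
        ENNReal.ofReal (C * Θ x r / φ x r) :=
  tail_condition_integral_bound_general R0 φ β1 β2 cU hβ1 hβ12 hcU hφpos hφscaleU Θ hΘ1 hΘmono J CJ
    hCJ hTail
end

section
/- Assume (M,d,μ) satisfies VD (constants C_μ, d2, parameter R0). Let φ be a scale function on M, let Θ : M × (0,∞) → [1,∞) be Borel measurable with r ↦ Θ(x,r) nondecreasing for each x and satisfying ∫_{B(x,r)} Θ(y,r) μ(dy) ≤ C V(x,r) for all x ∈ M and r ∈ (0,R0) (some C ≥ 1), and let J be a jump kernel on M satisfying the weighted tail condition: J(x, M \ B(x,s)) ≤ C_J Θ(x,s)/φ(x,s) for all x ∈ M and s ∈ (0,R0). Then there exists a constant C′ > 0 such that ∫_{B(x0,R)} J(x, M \ B(x0, R+r)) μ(dx) ≤ C′ (V(x0,R)/φ(x0,R)) (R/r)^{β2} for all x0 ∈ M and 0 < r ≤ R < R0, where β2 is the upper scaling exponent of φ. -/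
open MeasureTheory Metric Set
open scoped ENNReal

/-- **Lemma 6.1.** Assume volume doubling (constants `Cμ, d2`, parameter `R0`), let `φ`
be a scale function, `Θ ≥ 1` a weight nondecreasing in `r` with
`∫_{B(x,r)} Θ(y,r) dμ ≤ C V(x,r)` for `0 < r < R0`, and let `J` be a jump kernel
satisfying the weighted tail condition. Then there is `C' > 0` with
`∫_{B(x0,R)} J(x, B(x0,R+r)ᶜ) μ(dx) ≤ C' (V(x0,R)/φ(x0,R)) (R/r)^{β2}`
for all `x0 ∈ M` and `0 < r ≤ R < R0`. -/
theorem tail_condition_annulus_bound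
    {M : Type*} [MetricSpace M] [MeasurableSpace M] [BorelSpace M] [ProperSpace M]
    (μ : Measure M) [IsLocallyFiniteMeasure μ] [μ.IsOpenPosMeasure]
    (R0 : ℝ) (hR0 : 0 < R0)
    (hR0diam : ENNReal.ofReal R0 ≤ EMetric.diam (Set.univ : Set M))
    -- volume doubling
    (Cμ d2 : ℝ) (hCμ : 0 < Cμ) (hd2 : 0 < d2)
    (hVD : ∀ (x : M) (r R : ℝ), 0 < r → r ≤ R → R < 2 * R0 →
      μ (ball x R) ≤ ENNReal.ofReal (Cμ * (R / r) ^ d2) * μ (ball x r))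
    -- scale function φ
    (φ : M → ℝ → ℝ) (β1 β2 cL cU C0 : ℝ)
    (hβ1 : 0 < β1) (hβ12 : β1 ≤ β2) (hcL : 0 < cL) (hcU : 0 < cU) (hC0 : 1 ≤ C0)
    (hφmeas : Measurable (Function.uncurry φ))
    (hφpos : ∀ (x : M) (r : ℝ), 0 < r → 0 < φ x r)
    (hφmono : ∀ x : M, StrictMonoOn (φ x) (Set.Ioi 0))
    (hφcont : ∀ x : M, ContinuousOn (φ x) (Set.Ioi 0))
    (hφscaleL : ∀ (x : M) (r R : ℝ), 0 < r → r ≤ R → cL * (R / r) ^ β1 ≤ φ x R / φ x r)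
    (hφscaleU : ∀ (x : M) (r R : ℝ), 0 < r → r ≤ R → φ x R / φ x r ≤ cU * (R / r) ^ β2)
    (hφcomp : ∀ (x y : M) (r : ℝ), 0 < r → dist x y ≤ r → φ y r ≤ C0 * φ x r)
    -- weight Θ
    (Θ : M → ℝ → ℝ) (C : ℝ) (hC : 1 ≤ C)
    (hΘmeas : Measurable (Function.uncurry Θ))
    (hΘ1 : ∀ (x : M) (r : ℝ), 0 < r → 1 ≤ Θ x r)
    (hΘmono : ∀ x : M, MonotoneOn (Θ x) (Set.Ioi 0))
    (hΘvol : ∀ (x : M) (r : ℝ), 0 < r → r < R0 →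
      ∫⁻ y in ball x r, ENNReal.ofReal (Θ y r) ∂μ ≤ ENNReal.ofReal C * μ (ball x r))
    -- jump kernel J and the weighted tail condition
    (J : M → Measure M)
    (hJmeas : ∀ E : Set M, MeasurableSet E → Measurable fun x => J x E)
    (CJ : ℝ) (hCJ : 0 ≤ CJ)
    (hTail : ∀ (x : M) (s : ℝ), 0 < s → s < R0 →
      J x ((ball x s)ᶜ) ≤ ENNReal.ofReal (CJ * Θ x s / φ x s)) :
    ∃ C' : ℝ, 0 < C' ∧ ∀ (x0 : M) (r R : ℝ), 0 < r → r ≤ R → R < R0 →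
      ∫⁻ x in ball x0 R, J x ((ball x0 (R + r))ᶜ) ∂μ ≤
        ENNReal.ofReal (C' / φ x0 R * (R / r) ^ β2) * μ (ball x0 R) := by
  refine ⟨CJ * cU * C0 * C + 1, by positivity, ?_⟩
  intro x0 r R hr hrR hRR0
  have hRpos : 0 < R := lt_of_lt_of_le hr hrR
  have hφ0R : 0 < φ x0 R := hφpos x0 R hRpos
  have hpow : (0:ℝ) ≤ (R / r) ^ β2 := Real.rpow_nonneg (by positivity) β2
  set a : ℝ := CJ * cU * C0 * (R / r) ^ β2 / φ x0 R with ha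
  have ha0 : 0 ≤ a := by positivity
  have step1 : ∫⁻ x in ball x0 R, J x ((ball x0 (R + r))ᶜ) ∂μ ≤
      ∫⁻ x in ball x0 R, ENNReal.ofReal (a * Θ x R) ∂μ := by
    refine setLIntegral_mono' measurableSet_ball fun x hx => ?_
    have hxd : dist x x0 < R := mem_ball.mp hx
    have hsub : (ball x0 (R + r))ᶜ ⊆ (ball x r)ᶜ := by
      intro y hy
      simp only [mem_compl_iff, mem_ball, not_lt] at hy ⊢
      have := dist_triangle y x x0
      linarith
    have hφxr : 0 < φ x r := hφpos x r hr
    have hφxR : 0 < φ x R := hφpos x R hRpos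
    have hΘR1 : (1:ℝ) ≤ Θ x R := hΘ1 x R hRpos
    have hΘrR : Θ x r ≤ Θ x R :=
      hΘmono x (Set.mem_Ioi.mpr hr) (Set.mem_Ioi.mpr hRpos) hrR
    have hinv1 : 1 / φ x r ≤ cU * (R / r) ^ β2 / φ x R := by
      rw [div_le_div_iff₀ hφxr hφxR]
      have h1 := hφscaleU x r R hr hrR
      rw [div_le_iff₀ hφxr] at h1
      nlinarith
    have hinv2 : 1 / φ x R ≤ C0 / φ x0 R := by
      rw [div_le_div_iff₀ hφxR hφ0R]
      have := hφcomp x x0 R hRpos hxd.le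
      linarith
    have key : CJ * Θ x r / φ x r ≤ a * Θ x R := by
      calc CJ * Θ x r / φ x r ≤ CJ * Θ x R / φ x r := by
            exact div_le_div_of_nonneg_right (mul_le_mul_of_nonneg_left hΘrR hCJ) hφxr.le
        _ = (CJ * Θ x R) * (1 / φ x r) := by ring
        _ ≤ (CJ * Θ x R) * (cU * (R / r) ^ β2 / φ x R) := by
            refine mul_le_mul_of_nonneg_left hinv1 ?_
            have : (0:ℝ) ≤ Θ x R := le_trans zero_le_one hΘR1
            positivity
        _ = (CJ * Θ x R * (cU * (R / r) ^ β2)) * (1 / φ x R) := by ring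
        _ ≤ (CJ * Θ x R * (cU * (R / r) ^ β2)) * (C0 / φ x0 R) := by
            refine mul_le_mul_of_nonneg_left hinv2 ?_
            have : (0:ℝ) ≤ Θ x R := le_trans zero_le_one hΘR1
            positivity
        _ = a * Θ x R := by rw [ha]; ring
    calc J x ((ball x0 (R + r))ᶜ) ≤ J x ((ball x r)ᶜ) := measure_mono hsub
      _ ≤ ENNReal.ofReal (CJ * Θ x r / φ x r) :=
          hTail x r hr (lt_of_le_of_lt hrR hRR0)
      _ ≤ ENNReal.ofReal (a * Θ x R) := ENNReal.ofReal_le_ofReal key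
  have step2 : ∫⁻ x in ball x0 R, ENNReal.ofReal (a * Θ x R) ∂μ
      = ENNReal.ofReal a * ∫⁻ x in ball x0 R, ENNReal.ofReal (Θ x R) ∂μ := by
    simp_rw [ENNReal.ofReal_mul ha0]
    exact lintegral_const_mul' _ _ ENNReal.ofReal_ne_top
  have step3 : ENNReal.ofReal a * ∫⁻ x in ball x0 R, ENNReal.ofReal (Θ x R) ∂μ ≤
      ENNReal.ofReal a * (ENNReal.ofReal C * μ (ball x0 R)) :=
    mul_le_mul_right (hΘvol x0 R hRpos hRR0) _
  have hreal : a * C ≤ (CJ * cU * C0 * C + 1) / φ x0 R * (R / r) ^ β2 := by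
    have h : a * C = (CJ * cU * C0 * C) * ((R / r) ^ β2 / φ x0 R) := by
      rw [ha]; ring
    have h2 : (CJ * cU * C0 * C + 1) / φ x0 R * (R / r) ^ β2
        = (CJ * cU * C0 * C + 1) * ((R / r) ^ β2 / φ x0 R) := by ring
    rw [h, h2]
    have hnn : (0:ℝ) ≤ (R / r) ^ β2 / φ x0 R := by positivity
    nlinarith
  calc ∫⁻ x in ball x0 R, J x ((ball x0 (R + r))ᶜ) ∂μ
      ≤ ∫⁻ x in ball x0 R, ENNReal.ofReal (a * Θ x R) ∂μ := step1
    _ = ENNReal.ofReal a * ∫⁻ x in ball x0 R, ENNReal.ofReal (Θ x R) ∂μ := step2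
    _ ≤ ENNReal.ofReal a * (ENNReal.ofReal C * μ (ball x0 R)) := step3
    _ = ENNReal.ofReal (a * C) * μ (ball x0 R) := by
        rw [ENNReal.ofReal_mul ha0, mul_assoc]
    _ ≤ ENNReal.ofReal ((CJ * cU * C0 * C + 1) / φ x0 R * (R / r) ^ β2) *
          μ (ball x0 R) :=
        mul_le_mul_left (ENNReal.ofReal_le_ofReal hreal) _
end

section
/- Let (X, 𝒜, μ) be a measure space and D ∈ 𝒜 with 0 < μ(D) < ∞. Let L > 0 and let v : X → ℝ be measurable with 0 ≤ v(x) ≤ L for all x ∈ D, and write v̄ = μ(D)^{-1} ∫_D v dμ. If μ({x ∈ D : v(x) = 0}) ≥ m for some m > 0, then L · μ({x ∈ D : v(x) = L}) ≤ (μ(D)/m) ∫_D |v − v̄| dμ. -/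
/-!
On the zero set `Z` and the top level set `E` of `v` the deviation `|v - v̄|` equals `v̄` and
`L - v̄` respectively, so `∫_D |v - v̄| ≥ μ(Z) v̄ + μ(E) (L - v̄)`. Since `μ(Z) ≥ m` and
`μ(D) ≥ μ(E), m`, multiplying by `μ(D)` gives at least `m μ(E) v̄ + m μ(E) (L - v̄) = m L μ(E)`.
Only `v̄ ∈ [0, L]` matters, not that it is the mean.
-/

open MeasureTheory Set

section

variable {X : Type*} [MeasurableSpace X] {μ : Measure X}

lemma setIntegral_abs_sub_eq_of_eqOn {s : Set X} (hs : MeasurableSet s) {f : X → ℝ} {a c : ℝ}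
    (hf : EqOn f (fun _ => a) s) : ∫ x in s, |f x - c| ∂μ = μ.real s * |a - c| := by
  rw [setIntegral_congr_fun hs (g := fun _ => |a - c|) fun x hx => by simp only [hf hx],
    setIntegral_const, smul_eq_mul]

lemma add_le_setIntegral_abs_sub {D s t : Set X} {f : X → ℝ} {a b c : ℝ}
    (hs : MeasurableSet s) (ht : MeasurableSet t) (hsD : s ⊆ D) (htD : t ⊆ D)
    (hst : Disjoint s t) (hfs : EqOn f (fun _ => a) s) (hft : EqOn f (fun _ => b) t)
    (hint : IntegrableOn (fun x => |f x - c|) D μ) :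
    μ.real s * |a - c| + μ.real t * |b - c| ≤ ∫ x in D, |f x - c| ∂μ :=
  calc μ.real s * |a - c| + μ.real t * |b - c| = ∫ x in s ∪ t, |f x - c| ∂μ := by
        rw [setIntegral_union hst ht (hint.mono_set hsD) (hint.mono_set htD),
          setIntegral_abs_sub_eq_of_eqOn hs hfs, setIntegral_abs_sub_eq_of_eqOn ht hft]
    _ ≤ ∫ x in D, |f x - c| ∂μ :=
        setIntegral_mono_set hint (ae_of_all _ fun _ => abs_nonneg _)
          (union_subset hsD htD).eventuallyLE

lemma mul_measureReal_mul_le_setIntegral_abs_sub {D Z E : Set X} {f : X → ℝ} {c L m : ℝ}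
    (hD : μ D ≠ ⊤) (hZ : MeasurableSet Z) (hE : MeasurableSet E) (hZD : Z ⊆ D) (hED : E ⊆ D)
    (hZE : Disjoint Z E) (hfZ : EqOn f (fun _ => 0) Z) (hfE : EqOn f (fun _ => L) E)
    (hf : IntegrableOn f D μ) (hc : c ∈ Icc 0 L) (hmZ : m ≤ μ.real Z) :
    L * μ.real E * m ≤ μ.real D * ∫ x in D, |f x - c| ∂μ := by
  have hlow := add_le_setIntegral_abs_sub hZ hE hZD hED hZE hfZ hfE
    (hf.sub (integrableOn_const hD)).abs
  rw [zero_sub, abs_neg, abs_of_nonneg hc.1, abs_of_nonneg (sub_nonneg.2 hc.2)] at hlow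
  have hμZ : μ.real Z ≤ μ.real D := measureReal_mono hZD hD
  have hμE : μ.real E ≤ μ.real D := measureReal_mono hED hD
  have hE0 : 0 ≤ μ.real E := measureReal_nonneg
  calc L * μ.real E * m = m * μ.real E * c + m * μ.real E * (L - c) := by ring
    _ ≤ μ.real D * μ.real Z * c + μ.real D * μ.real E * (L - c) := by
        have hc0 := hc.1
        have hLc := sub_nonneg.2 hc.2
        gcongr ?_ * _ + ?_ * _
        · rw [mul_comm (μ.real D)]; exact mul_le_mul hmZ hμE hE0 measureReal_nonneg
        · exact mul_le_mul_of_nonneg_right (hmZ.trans hμZ) hE0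
    _ ≤ μ.real D * ∫ x in D, |f x - c| ∂μ := by
        rw [mul_assoc, mul_assoc, ← mul_add]; gcongr

end

/-- **Display (8.5)** (key inequality in the proof of Lemma 8.3). Let `(X,𝒜,μ)` be a
measure space, `D` measurable with `0 < μ(D) < ∞`, `L > 0`, and `v` measurable with
`0 ≤ v ≤ L` on `D`; write `v̄ = μ(D)⁻¹ ∫_D v dμ`. If `μ({x ∈ D : v x = 0}) ≥ m` for
some `m > 0`, then `L · μ({x ∈ D : v x = L}) ≤ (μ(D)/m) ∫_D |v − v̄| dμ`. -/
theorem max_level_set_bound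
    {X : Type*} [MeasurableSpace X] (μ : Measure X)
    (D : Set X) (hD : MeasurableSet D) (hD0 : 0 < μ D) (hDfin : μ D < ⊤)
    (L : ℝ) (hL : 0 < L) (v : X → ℝ) (hv : Measurable v)
    (hv0 : ∀ x ∈ D, 0 ≤ v x) (hvL : ∀ x ∈ D, v x ≤ L)
    (m : ℝ) (hm : 0 < m) (hm' : ENNReal.ofReal m ≤ μ {x ∈ D | v x = 0}) :
    L * (μ {x ∈ D | v x = L}).toReal ≤
      ((μ D).toReal / m) *
        ∫ x in D, |v x - (μ D).toReal⁻¹ * ∫ y in D, v y ∂μ| ∂μ := by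
  have hvD : ∀ᵐ x ∂μ.restrict D, v x ∈ Icc 0 L :=
    (ae_restrict_mem hD).mono fun x hx => ⟨hv0 x hx, hvL x hx⟩
  have hint : IntegrableOn v D μ := Measure.integrableOn_of_bounded (M := L) hDfin.ne
    hv.aestronglyMeasurable <| hvD.mono fun x hx => by
      rw [Real.norm_eq_abs, abs_of_nonneg hx.1]; exact hx.2
  have hmean : (μ D).toReal⁻¹ * ∫ y in D, v y ∂μ ∈ Icc 0 L := by
    have := (convex_Icc 0 L).set_average_mem isClosed_Icc hD0.ne' hDfin.ne hvD hint
    rwa [setAverage_eq, smul_eq_mul] at this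
  have hZD : {x ∈ D | v x = 0} ⊆ D := sep_subset _ _
  have hmZ : m ≤ μ.real {x ∈ D | v x = 0} :=
    (ENNReal.ofReal_le_iff_le_toReal (measure_ne_top_of_subset hZD hDfin.ne)).1 hm'
  rw [div_mul_eq_mul_div, le_div_iff₀ hm]
  exact mul_measureReal_mul_le_setIntegral_abs_sub hDfin.ne
    (hD.inter (hv (measurableSet_singleton 0))) (hD.inter (hv (measurableSet_singleton L)))
    hZD (sep_subset _ _) (disjoint_left.2 fun x hxZ hxE => hL.ne (hxZ.2.symm.trans hxE.2))
    (fun x hx => hx.2) (fun x hx => hx.2) hint hmean hmZ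
end
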